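/- arXiv:1901.05621 — 5 statements merged into one kernel-verified Lean document; each statement's English description precedes it below -/
import Mathlib

section
/- Let r^(1), ..., r^(ρ) ∈ (0,1)^d be pairwise incomparable points with no ties in any coordinate, and let S = ∩_{i=1}^ρ (O⁻(r^(i)))^c be the record-setting region. A point g ∈ (0,1)^d with all coordinates nonzero is a minimal element of S (with respect to the coordinatewise partial order ≤) if and only if (i) g ∈ S, and (ii) there exist d distinct indices i_1,...,i_d ∈ [ρ] such that for every j ∈ [d], g_j = r^(i_j)_j = min{r^(i_ℓ)_j : ℓ ∈ [d]}. -/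
/-! Lowering one coordinate `g j` of a generator `g` to a value `m` just below it leaves the
record-setting region, so some `r i` strictly dominates the lowered point. Taking `m` above every
`r i j < g j` forces `r i j = g j`, while `r i` exceeds `g` strictly in all other coordinates:
`r i` pins `g j`. Conversely, if every coordinate of `g` is pinned, a point below `g` and strictly
below it in coordinate `j` is strictly dominated by the point pinning `g j`. As no coordinate has
ties, a choice of pinning points amounts to distinct indices with
`g j = r (i j) j = min_ℓ r (i ℓ) j`. -/

/-- The record-setting region of the points `r 0, …, r (ρ-1)` within `[0,1)^d`. -/
def recordSet {d ρ : ℕ} (r : Fin ρ → Fin d → ℝ) : Set (Fin d → ℝ) :=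
  {x | (∀ j, x j ∈ Set.Ico (0:ℝ) 1) ∧ ∀ i, ¬ ∀ j, x j < r i j}

open Set Filter Topology

section Pinned

variable {ι κ α : Type*}

def IsPinned [LT α] (r : ι → κ → α) (g : κ → α) : Prop :=
  ∀ j, ∃ i, g j = r i j ∧ ∀ j' ≠ j, g j' < r i j'

theorem IsPinned.exists_injective_eq_min [Preorder α] {r : ι → κ → α} {g : κ → α}
    (h : IsPinned r g) :
    ∃ i : κ → ι, Function.Injective i ∧ ∀ j, g j = r (i j) j ∧ ∀ ℓ, r (i j) j ≤ r (i ℓ) j := by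
  choose i hi_eq hi_lt using h
  refine ⟨i, fun j ℓ hjℓ => ?_, fun j => ⟨hi_eq j, fun ℓ => ?_⟩⟩
  · by_contra hne
    exact (hi_lt ℓ j hne).ne (by rw [← hjℓ, hi_eq j])
  · rcases eq_or_ne ℓ j with rfl | hne
    · exact le_rfl
    · exact hi_eq j ▸ (hi_lt ℓ j hne.symm).le

theorem isPinned_of_injective_eq_min [PartialOrder α] {r : ι → κ → α} {g : κ → α}
    (hties : ∀ j, Function.Injective (fun i => r i j)) {i : κ → ι} (hinj : Function.Injective i)
    (hi : ∀ j, g j = r (i j) j ∧ ∀ ℓ, r (i j) j ≤ r (i ℓ) j) : IsPinned r g := by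
  refine fun j => ⟨i j, (hi j).1, fun j' hj' => ?_⟩
  have hne : r (i j') j' ≠ r (i j) j' := fun h => hj' (hinj (hties j' h))
  exact (hi j').1 ▸ lt_of_le_of_ne ((hi j').2 j) hne

end Pinned

section RecordSet

variable {d ρ : ℕ} {r : Fin ρ → Fin d → ℝ} {g : Fin d → ℝ}

theorem mem_recordSet_iff {x : Fin d → ℝ} :
    x ∈ recordSet r ↔ (∀ j, x j ∈ Ico (0 : ℝ) 1) ∧ ∀ i, ∃ j, r i j ≤ x j := by
  simp only [recordSet, mem_ofPred_eq, not_forall, not_lt]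

theorem IsPinned.eq_of_mem_recordSet_of_le (h : IsPinned r g) {y : Fin d → ℝ}
    (hy : y ∈ recordSet r) (hyg : y ≤ g) : y = g := by
  by_contra hne
  obtain ⟨j, hj⟩ : ∃ j, y j < g j := by
    by_contra! hge
    exact hne (le_antisymm hyg hge)
  obtain ⟨i, hgi, hi⟩ := h j
  obtain ⟨j', hj'⟩ := (mem_recordSet_iff.1 hy).2 i
  rcases eq_or_ne j' j with rfl | hne'
  · exact (hgi ▸ hj).not_ge hj'
  · exact ((hyg j').trans_lt (hi j' hne')).not_ge hj'

theorem isPinned_of_minimal (hg0 : ∀ j, 0 < g j) (hgS : g ∈ recordSet r)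
    (hmin : ∀ y ∈ recordSet r, y ≤ g → y = g) : IsPinned r g := by
  intro j
  by_contra! hunpinned
  -- a value `m < g j` that still lies above every `r i j` below `g j`
  have hm : ∀ᶠ m in 𝓝[<] g j, (0 < m ∧ ∀ i, r i j < g j → r i j < m) ∧ m < g j :=
    (((eventually_gt_nhds (hg0 j)).and (eventually_all.2 fun i =>
      eventually_imp_distrib_left.2 fun h => eventually_gt_nhds h)).filter_mono
      nhdsWithin_le_nhds).and self_mem_nhdsWithin
  obtain ⟨m, ⟨hm0, hm_above⟩, hmg⟩ := hm.exists
  set y := Function.update g j m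
  have hyS : y ∈ recordSet r := by
    refine mem_recordSet_iff.2 ⟨fun j' => ?_, fun i => ?_⟩
    · rcases eq_or_ne j' j with rfl | hne
      · simpa [y] using ⟨hm0.le, hmg.trans (hgS.1 j').2⟩
      · simpa [y, hne] using hgS.1 j'
    · obtain ⟨j', hj'⟩ := (mem_recordSet_iff.1 hgS).2 i
      rcases eq_or_ne j' j with rfl | hne
      · rcases hj'.lt_or_eq with hlt | heq
        · exact ⟨j', by simpa [y] using (hm_above i hlt).le⟩
        · obtain ⟨j'', hj'', hle⟩ := hunpinned i heq.symm
          exact ⟨j'', by simpa [y, hj''] using hle⟩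
      · exact ⟨j', by simpa [y, hne] using hj'⟩
  exact (update_lt_self_iff.2 hmg).ne (hmin y hyS (update_le_self_iff.2 hmg.le))

end RecordSet

theorem interior_generator_characterization_general (d ρ : ℕ)
    (r : Fin ρ → Fin d → ℝ)
    (hties : ∀ j : Fin d, Function.Injective (fun i => r i j))
    (g : Fin d → ℝ) (hg : ∀ j, g j ∈ Set.Ioo (0:ℝ) 1) :
    (g ∈ recordSet r ∧ ∀ y ∈ recordSet r, y ≤ g → y = g) ↔
    (g ∈ recordSet r ∧ ∃ i : Fin d → Fin ρ, Function.Injective i ∧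
      ∀ j : Fin d, g j = r (i j) j ∧ ∀ ℓ : Fin d, r (i j) j ≤ r (i ℓ) j) := by
  constructor
  · rintro ⟨hgS, hmin⟩
    exact ⟨hgS, (isPinned_of_minimal (fun j => (hg j).1) hgS hmin).exists_injective_eq_min⟩
  · rintro ⟨hgS, i, hinj, hi⟩
    exact ⟨hgS, fun y hy hyg =>
      (isPinned_of_injective_eq_min hties hinj hi).eq_of_mem_recordSet_of_le hy hyg⟩

theorem interior_generator_characterization (d ρ : ℕ) (hd : 1 ≤ d)
    (r : Fin ρ → Fin d → ℝ)
    (hr : ∀ i j, r i j ∈ Set.Ioo (0:ℝ) 1)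
    (hties : ∀ j : Fin d, Function.Injective (fun i => r i j))
    (hinc : ∀ i i' : Fin ρ, i ≠ i' → ¬ r i ≤ r i')
    (g : Fin d → ℝ) (hg : ∀ j, g j ∈ Set.Ioo (0:ℝ) 1) :
    (g ∈ recordSet r ∧ ∀ y ∈ recordSet r, y ≤ g → y = g) ↔
    (g ∈ recordSet r ∧ ∃ i : Fin d → Fin ρ, Function.Injective i ∧
      ∀ j : Fin d, g j = r (i j) j ∧ ∀ ℓ : Fin d, r (i j) j ≤ r (i ℓ) j) :=
  interior_generator_characterization_general d ρ r hties g hg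
end

section
/- Let r^(1), ..., r^(ρ) ∈ (0,1)^d be pairwise incomparable points with no coordinate ties, let S be the record-setting region, and let G be the set of minimal elements of S. Then the number of minimal elements satisfies |G| ≤ C(ρ + d - 1, d - 1), the binomial coefficient. -/
open Finset

/-- The generators: minimal elements of the record-setting region. -/
def generators {d ρ : ℕ} (r : Fin ρ → Fin d → ℝ) : Set (Fin d → ℝ) :=
  {g | g ∈ recordSet r ∧ ∀ y ∈ recordSet r, y ≤ g → y = g}

namespace GenBound

variable {d ρ : ℕ}

/-- Generalized region: only coordinates in `J` active, only records in `I` considered. -/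
def InRegion (r : Fin ρ → Fin d → ℝ) (I : Finset (Fin ρ)) (J : Finset (Fin d))
    (x : Fin d → ℝ) : Prop :=
  (∀ j, x j ∈ Set.Ico (0:ℝ) 1) ∧ (∀ j ∉ J, x j = 0) ∧ ∀ i ∈ I, ∃ j ∈ J, r i j ≤ x j

def Gen (r : Fin ρ → Fin d → ℝ) (I : Finset (Fin ρ)) (J : Finset (Fin d)) :
    Set (Fin d → ℝ) :=
  {g | InRegion r I J g ∧ ∀ y, InRegion r I J y → y ≤ g → y = g}

/-- Each coordinate of a generator equals the max of 0 and dominated record coordinates. -/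
lemma coord_eq (r : Fin ρ → Fin d → ℝ) {I : Finset (Fin ρ)} {J : Finset (Fin d)}
    {g : Fin d → ℝ} (hg : g ∈ Gen r I J) {j0 : Fin d} (hj0 : j0 ∈ J) :
    g j0 = (insert (0:ℝ) (((I.filter fun i => r i j0 ≤ g j0)).image fun i => r i j0)).max'
      (insert_nonempty _ _) := by
  set s : Finset ℝ := insert (0:ℝ) (((I.filter fun i => r i j0 ≤ g j0)).image fun i => r i j0)
    with hs
  set M := s.max' (insert_nonempty _ _) with hM
  have hM0 : (0:ℝ) ≤ M := le_max' _ _ (mem_insert_self _ _)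
  have hMle : M ≤ g j0 := by
    apply max'_le
    intro x hx
    rcases mem_insert.1 hx with h0 | hxi
    · exact h0 ▸ (hg.1.1 j0).1
    · obtain ⟨i, hi, rfl⟩ := mem_image.1 hxi
      exact (mem_filter.1 hi).2
  set y := Function.update g j0 M with hy
  have hyle : y ≤ g := by
    intro j
    by_cases h : j = j0
    · subst h; simp [hy, hMle]
    · simp [hy, Function.update_of_ne h]
  have hyreg : InRegion r I J y := by
    refine ⟨?_, ?_, ?_⟩
    · intro j
      by_cases h : j = j0
      · subst h; simp only [hy, Function.update_self]
        exact ⟨hM0, lt_of_le_of_lt hMle (hg.1.1 j).2⟩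
      · simpa [hy, Function.update_of_ne h] using hg.1.1 j
    · intro j hj
      have hne : j ≠ j0 := fun h => hj (h ▸ hj0)
      simp [hy, Function.update_of_ne hne, hg.1.2.1 j hj]
    · intro i hi
      obtain ⟨j, hjJ, hij⟩ := hg.1.2.2 i hi
      by_cases h : j = j0
      · subst h
        refine ⟨j, hjJ, ?_⟩
        have : r i j ∈ s := by
          rw [hs]
          exact mem_insert_of_mem (mem_image_of_mem _ (mem_filter.2 ⟨hi, hij⟩))
        simpa [hy, Function.update_self] using le_max' _ _ this
      · exact ⟨j, hjJ, by simpa [hy, Function.update_of_ne h] using hij⟩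
  have := hg.2 y hyreg hyle
  rw [← this]
  simp [hy]

/-- The set of generators is finite. -/
lemma gen_finite (r : Fin ρ → Fin d → ℝ) (I : Finset (Fin ρ)) (J : Finset (Fin d)) :
    (Gen r I J).Finite := by
  apply Set.Finite.subset
    (Set.Finite.pi' (t := fun j => insert (0:ℝ) (Set.range fun i : Fin ρ => r i j))
      (fun j => (Set.finite_range _).insert 0))
  intro g hg j
  by_cases hj : j ∈ J
  · have h := coord_eq r hg hj
    have hmem := max'_mem (insert (0:ℝ)
      (((I.filter fun i => r i j ≤ g j)).image fun i => r i j)) (insert_nonempty _ _)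
    rw [← h] at hmem
    rcases mem_insert.1 hmem with h0 | hi
    · exact Or.inl h0
    · obtain ⟨i, _, hrij⟩ := mem_image.1 hi
      exact Or.inr ⟨i, hrij⟩
  · exact Or.inl (hg.1.2.1 j hj)

/-- The recursive bound function. -/
def fbound : ℕ → ℕ → ℕ
  | n, 0 => if n = 0 then 1 else 0
  | n, (m+1) => ∑ t ∈ Finset.range (n+1), fbound t m

lemma hockey (m : ℕ) : ∀ n : ℕ, ∑ t ∈ Finset.range (n+1), (t+m).choose m = (n+m+1).choose (m+1)
  | 0 => by simp
  | (n+1) => by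
    rw [Finset.sum_range_succ, hockey m n]
    have h1 : n+1+m = n+m+1 := by omega
    rw [h1]
    have h2 : (n+m+2).choose (m+1) = (n+m+1).choose m + (n+m+1).choose (m+1) :=
      Nat.choose_succ_succ _ _
    rw [show n+m+1+1 = n+m+2 by omega]
    omega

lemma fbound_succ (m : ℕ) : ∀ n : ℕ, fbound n (m+1) = (n+m).choose m := by
  induction m with
  | zero =>
    intro n
    show (∑ t ∈ Finset.range (n+1), fbound t 0) = _
    simp only [fbound, Nat.choose_zero_right]
    rw [Finset.sum_ite_eq' (Finset.range (n+1)) 0 (fun _ => 1)]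
    simp
  | succ m ih =>
    intro n
    show (∑ t ∈ Finset.range (n+1), fbound t (m+1)) = _
    calc (∑ t ∈ Finset.range (n+1), fbound t (m+1))
        = ∑ t ∈ Finset.range (n+1), (t+m).choose m := by
          exact Finset.sum_congr rfl fun t _ => ih t
      _ = (n+m+1).choose (m+1) := hockey m n
      _ = (n+(m+1)).choose (m+1) := by ring_nf

lemma fbound_le_one (n : ℕ) : fbound n 0 ≤ 1 := by
  simp only [fbound]; split <;> simp

/-- two generators with the same count of dominated records in coordinate j0 dominate
    the same records there, and agree at j0. -/
lemma filter_eq_of_card_eq (r : Fin ρ → Fin d → ℝ) {I : Finset (Fin ρ)} (j0 : Fin d)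
    {g g' : Fin d → ℝ}
    (h : (I.filter fun i => r i j0 ≤ g j0).card = (I.filter fun i => r i j0 ≤ g' j0).card) :
    (I.filter fun i => r i j0 ≤ g j0) = (I.filter fun i => r i j0 ≤ g' j0) := by
  rcases le_total (g j0) (g' j0) with h' | h'
  · refine Finset.eq_of_subset_of_card_le ?_ (le_of_eq h.symm)
    intro i hi
    rw [Finset.mem_filter] at hi ⊢
    exact ⟨hi.1, le_trans hi.2 h'⟩
  · refine (Finset.eq_of_subset_of_card_le ?_ (le_of_eq h)).symm
    intro i hi
    rw [Finset.mem_filter] at hi ⊢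
    exact ⟨hi.1, le_trans hi.2 h'⟩

lemma main (r : Fin ρ → Fin d → ℝ) :
    ∀ (m : ℕ) (I : Finset (Fin ρ)) (J : Finset (Fin d)), J.card = m →
      (Gen r I J).ncard ≤ fbound I.card m := by
  intro m
  induction m with
  | zero =>
    intro I J hJ
    rw [Finset.card_eq_zero] at hJ
    subst hJ
    rcases I.eq_empty_or_nonempty with rfl | ⟨i0, hi0⟩
    · calc (Gen r ∅ ∅).ncard ≤ ({fun _ => (0:ℝ)} : Set (Fin d → ℝ)).ncard := by
            apply Set.ncard_le_ncard _ (Set.finite_singleton _)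
            intro g hg
            have : g = fun _ => (0:ℝ) := funext fun j => hg.1.2.1 j (notMem_empty j)
            simp [this]
        _ = 1 := Set.ncard_singleton _
        _ ≤ fbound (∅ : Finset (Fin ρ)).card 0 := by simp [fbound]
    · have : Gen r I ∅ = ∅ := by
        ext g
        simp only [Set.mem_empty_iff_false, iff_false]
        intro hg
        obtain ⟨j, hj, -⟩ := hg.1.2.2 i0 hi0
        exact notMem_empty j hj
      rw [this]
      simp
  | succ m ih =>
    intro I J hJ
    have hJne : J.Nonempty := Finset.card_pos.1 (hJ ▸ Nat.succ_pos m)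
    obtain ⟨j0, hj0⟩ := hJne
    set n := I.card with hn
    have hfin := gen_finite r I J
    set S := hfin.toFinset with hS
    have hcard : (Gen r I J).ncard = S.card := Set.ncard_eq_toFinset_card _ hfin
    rw [hcard]
    have hmap : ∀ g ∈ S, (I.filter fun i => r i j0 ≤ g j0).card ∈ Finset.range (n+1) := by
      intro g _
      rw [Finset.mem_range]
      exact Nat.lt_succ_of_le (Finset.card_le_card (Finset.filter_subset _ _))
    rw [Finset.card_eq_sum_card_fiberwise hmap]
    show (∑ k ∈ Finset.range (n+1),
      (S.filter fun g => (I.filter fun i => r i j0 ≤ g j0).card = k).card) ≤ fbound n (m+1)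
    have hstep : ∀ k ∈ Finset.range (n+1),
        (S.filter fun g => (I.filter fun i => r i j0 ≤ g j0).card = k).card
          ≤ fbound (n - k) m := by
      intro k hk
      set F := S.filter fun g => (I.filter fun i => r i j0 ≤ g j0).card = k with hF
      rcases F.eq_empty_or_nonempty with hFe | ⟨g0, hg0⟩
      · simp [hFe]
      · have hg0' := Finset.mem_filter.1 hg0
        have hg0S : g0 ∈ Gen r I J := hfin.mem_toFinset.1 hg0'.1
        set K := I.filter fun i => r i j0 ≤ g0 j0 with hK
        have hKcard : K.card = k := hg0'.2
        have hKI : K ⊆ I := Finset.filter_subset _ _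
        -- every g in the fiber has the same dominated set K and same value at j0
        have hsame : ∀ g ∈ F, (I.filter fun i => r i j0 ≤ g j0) = K := by
          intro g hg
          exact filter_eq_of_card_eq r j0 ((Finset.mem_filter.1 hg).2.trans hKcard.symm)
        have hval : ∀ g ∈ F, g j0 = g0 j0 := by
          intro g hg
          have hgG : g ∈ Gen r I J := hfin.mem_toFinset.1 (Finset.mem_filter.1 hg).1
          rw [coord_eq r hgG hj0, coord_eq r hg0S hj0, hsame g hg, ← hK]
        -- the projection map
        have hsub := gen_finite r (I \ K) (J.erase j0)
        have hbound : (Gen r (I \ K) (J.erase j0)).ncard ≤ fbound (n - k) m := by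
          have h1 : (J.erase j0).card = m := by
            rw [Finset.card_erase_of_mem hj0, hJ]
            omega
          have h2 : (I \ K).card = n - k := by
            rw [Finset.card_sdiff_of_subset hKI, hKcard]
          exact h2 ▸ ih (I \ K) (J.erase j0) h1
        refine le_trans ?_ (le_trans (le_of_eq (Set.ncard_eq_toFinset_card _ hsub).symm) hbound)
        apply Finset.card_le_card_of_injOn (fun g => Function.update g j0 0)
        · -- maps into the subproblem generators
          intro g hg
          rw [Finset.mem_coe, hsub.mem_toFinset]; beta_reduce
          have hgG : g ∈ Gen r I J := hfin.mem_toFinset.1 (Finset.mem_filter.1 hg).1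
          have hKg : (I.filter fun i => r i j0 ≤ g j0) = K := hsame g hg
          constructor
          · refine ⟨?_, ?_, ?_⟩
            · intro j
              by_cases h : j = j0
              · subst h; simp [Set.mem_Ico]
              · simpa [Function.update_of_ne h] using hgG.1.1 j
            · intro j hj
              by_cases h : j = j0
              · subst h; simp
              · rw [Function.update_of_ne h]
                exact hgG.1.2.1 j fun hjJ => hj (Finset.mem_erase.2 ⟨h, hjJ⟩)
            · intro i hi
              have hiI : i ∈ I := (Finset.mem_sdiff.1 hi).1
              have hiK : i ∉ K := (Finset.mem_sdiff.1 hi).2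
              obtain ⟨j, hjJ, hij⟩ := hgG.1.2.2 i hiI
              have h : j ≠ j0 := by
                intro h; subst h
                exact hiK (hKg ▸ Finset.mem_filter.2 ⟨hiI, hij⟩)
              exact ⟨j, Finset.mem_erase.2 ⟨h, hjJ⟩, by rwa [Function.update_of_ne h]⟩
          · -- minimality in the subproblem
            intro y hy hyg
            set z := Function.update y j0 (g j0) with hz
            have hzreg : InRegion r I J z := by
              refine ⟨?_, ?_, ?_⟩
              · intro j
                by_cases h : j = j0
                · subst h; simpa [hz] using hgG.1.1 j
                · simpa [hz, Function.update_of_ne h] using hy.1 j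
              · intro j hj
                have h : j ≠ j0 := fun h => hj (h ▸ hj0)
                rw [hz]; rw [Function.update_of_ne h]
                exact hy.2.1 j fun hjJ => hj (Finset.mem_of_mem_erase hjJ)
              · intro i hi
                by_cases hiK : i ∈ K
                · refine ⟨j0, hj0, ?_⟩
                  have : r i j0 ≤ g j0 := (Finset.mem_filter.1 (hKg ▸ hiK : i ∈ I.filter _)).2
                  simpa [hz] using this
                · obtain ⟨j, hjJ, hij⟩ := hy.2.2 i (Finset.mem_sdiff.2 ⟨hi, hiK⟩)
                  have h : j ≠ j0 := (Finset.mem_erase.1 hjJ).1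
                  exact ⟨j, Finset.mem_of_mem_erase hjJ, by
                    rw [hz, Function.update_of_ne h]; exact hij⟩
            have hzle : z ≤ g := by
              intro j
              by_cases h : j = j0
              · subst h; simp [hz]
              · rw [hz, Function.update_of_ne h]
                have := hyg j
                rwa [Function.update_of_ne h] at this
            have hzg := hgG.2 z hzreg hzle
            funext j
            by_cases h : j = j0
            · subst h
              rw [Function.update_self]
              exact hy.2.1 j (fun hc => (Finset.mem_erase.1 hc).1 rfl)
            · rw [Function.update_of_ne h]
              have : z j = g j := congrFun hzg j
              rwa [hz, Function.update_of_ne h] at this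
        · -- injectivity
          intro g hg g' hg' heq
          have hgF : g ∈ F := hg
          have hg'F : g' ∈ F := hg'
          have heq' : Function.update g j0 0 = Function.update g' j0 0 := heq
          funext j
          by_cases h : j = j0
          · subst h
            rw [hval g hgF, hval g' hg'F]
          · have := congrFun heq' j
            rwa [Function.update_of_ne h, Function.update_of_ne h] at this
    calc (∑ k ∈ Finset.range (n+1),
            (S.filter fun g => (I.filter fun i => r i j0 ≤ g j0).card = k).card)
        ≤ ∑ k ∈ Finset.range (n+1), fbound (n - k) m := Finset.sum_le_sum hstep
      _ = ∑ k ∈ Finset.range (n+1), fbound (n+1-1-k) m :=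
            Finset.sum_congr rfl fun k _ => by congr 1
      _ = ∑ k ∈ Finset.range (n+1), fbound k m :=
            Finset.sum_range_reflect (fun j => fbound j m) (n+1)
      _ = fbound n (m+1) := rfl

lemma generators_eq (r : Fin ρ → Fin d → ℝ) :
    generators r = Gen r Finset.univ Finset.univ := by
  have hreg : ∀ x, x ∈ recordSet r ↔ InRegion r Finset.univ Finset.univ x := by
    intro x
    constructor
    · rintro ⟨h1, h2⟩
      refine ⟨h1, fun j hj => absurd (Finset.mem_univ j) hj, fun i _ => ?_⟩
      have := h2 i
      push_neg at this
      obtain ⟨j, hj⟩ := this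
      exact ⟨j, Finset.mem_univ j, hj⟩
    · rintro ⟨h1, _, h3⟩
      refine ⟨h1, fun i hc => ?_⟩
      obtain ⟨j, _, hj⟩ := h3 i (Finset.mem_univ i)
      exact absurd (hc j) (not_lt.2 hj)
  ext g
  simp only [generators, Gen, Set.mem_setOf_eq]
  constructor
  · rintro ⟨h1, h2⟩
    exact ⟨(hreg g).1 h1, fun y hy hyle => h2 y ((hreg y).2 hy) hyle⟩
  · rintro ⟨h1, h2⟩
    exact ⟨(hreg g).2 h1, fun y hy hyle => h2 y ((hreg y).1 hy) hyle⟩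

end GenBound

theorem generators_upper_bound (d ρ : ℕ)
    (r : Fin ρ → Fin d → ℝ)
    (hr : ∀ i j, r i j ∈ Set.Ioo (0:ℝ) 1)
    (hties : ∀ j : Fin d, Function.Injective (fun i => r i j))
    (hinc : ∀ i i' : Fin ρ, i ≠ i' → ¬ r i ≤ r i') :
    (generators r).ncard ≤ Nat.choose (ρ + d - 1) (d - 1) := by
  rw [GenBound.generators_eq r]
  have h := GenBound.main r d Finset.univ Finset.univ (by simp)
  simp only [Finset.card_univ, Fintype.card_fin] at h
  refine le_trans h ?_
  cases d with
  | zero =>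
    simpa using GenBound.fbound_le_one ρ
  | succ m =>
    rw [GenBound.fbound_succ m ρ]
    have h1 : ρ + (m+1) - 1 = ρ + m := by omega
    have h2 : (m+1) - 1 = m := by omega
    rw [h1, h2]
end

section
/- Let d ≥ 1 and let r^(1), ..., r^(ρ) ∈ (0,1)^d be pairwise incomparable points with no ties in any coordinate. Then the number γ of minimal elements of the record-setting region S satisfies γ ≥ (d-1)ρ + 1. -/
/-
Induct on `ρ`, deleting the point `y = r i₀` with the smallest first coordinate `c`; let `r'` be
the remaining points. A generator of `r'` survives as a generator of `r` unless it lies strictly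
below `y`. For each such `a ≺ y` and each direction `j`, raising `a j` to `y j` and descending
again yields a generator of `r` on the facet `b j = y j`, `b k < y k` (`k ≠ j`). These facets are
pairwise disjoint and contain no generator of `r'`. Every facet is nonempty, since `y` itself lies
above some `a ≺ y`, and on the facet `j = c` the map `a ↦ b` is injective: as `y c` is below every
other `r' i c`, the facet point `b` keeps the meet of two such `a` inside the region. Hence `r` has
at least `d - 1` more generators than `r'`.
-/

local infixl:50 " ≺ " => StrongLT

section

open Set Filter Topology Function

variable {d ρ : ℕ} {r : Fin ρ → Fin d → ℝ}

lemma mem_recordSet_of_le {x y : Fin d → ℝ} (hx : x ∈ recordSet r) (hxy : x ≤ y)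
    (hy : ∀ j, y j < 1) : y ∈ recordSet r :=
  ⟨fun j => ⟨(hx.1 j).1.trans (hxy j), hy j⟩,
    fun i h => hx.2 i (strongLT_of_le_of_strongLT hxy h)⟩

lemma exists_strongLT_of_notMem_recordSet {x : Fin d → ℝ} (hx : ∀ j, x j ∈ Ico (0:ℝ) 1)
    (h : x ∉ recordSet r) : ∃ i, x ≺ r i := by
  by_contra! h'
  exact h ⟨hx, h'⟩

lemma isCompact_recordSet_inter_Iic (x : Fin d → ℝ) (hx : x ∈ recordSet r) :
    IsCompact (recordSet r ∩ Iic x) := by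
  have hK : recordSet r ∩ Iic x = Icc 0 x ∩ ⋂ i, ⋃ j, {z | r i j ≤ z j} := by
    ext z
    simp only [recordSet, mem_inter_iff, mem_ofPred_eq, mem_Iic, mem_Icc, mem_iInter, mem_iUnion,
      mem_Ico, not_forall, not_lt]
    exact ⟨fun ⟨⟨h0, hr⟩, hz⟩ => ⟨⟨fun j => (h0 j).1, hz⟩, hr⟩,
      fun ⟨⟨h0, hz⟩, hr⟩ => ⟨⟨fun j => ⟨h0 j, (hz j).trans_lt (hx.1 j).2⟩, hr⟩, hz⟩⟩
  rw [hK]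
  exact isCompact_Icc.inter_right <| isClosed_iInter fun i => isClosed_iUnion_of_finite
    fun j => isClosed_le continuous_const (continuous_apply j)

lemma exists_generator_le {x : Fin d → ℝ} (hx : x ∈ recordSet r) :
    ∃ g ∈ generators r, g ≤ x := by
  -- A minimiser of the coordinate sum is minimal for the coordinatewise order.
  obtain ⟨g, ⟨hg, hgx⟩, hmin⟩ := (isCompact_recordSet_inter_Iic x hx).exists_isMinOn
    ⟨x, hx, mem_Iic.2 le_rfl⟩
    (continuous_finsetSum Finset.univ fun j _ => continuous_apply j).continuousOn
  refine ⟨g, ⟨hg, fun y hy hyg => funext fun j => ?_⟩, hgx⟩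
  have hsum : ∑ j, y j = ∑ j, g j :=
    le_antisymm (Finset.sum_le_sum fun j _ => hyg j) (hmin ⟨hy, hyg.trans hgx⟩)
  exact (Finset.sum_eq_sum_iff_of_le fun j _ => hyg j).1 hsum j (Finset.mem_univ j)

lemma exists_eq_of_mem_generators {g : Fin d → ℝ} (hg : g ∈ generators r) {j : Fin d}
    (hj : 0 < g j) : ∃ i, g j = r i j ∧ ∀ k ≠ j, g k < r i k := by
  by_contra! h
  obtain ⟨t, ht0, htg, ht⟩ : ∃ t, 0 ≤ t ∧ t < g j ∧ ∀ i, r i j < g j → r i j ≤ t := by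
    have : ∀ᶠ t in 𝓝[<] g j, 0 ≤ t ∧ t < g j ∧ ∀ i, r i j < g j → r i j ≤ t :=
      ((eventually_ge_nhds hj).filter_mono nhdsWithin_le_nhds).and <|
        eventually_mem_nhdsWithin.and <| eventually_all.2 fun i => eventually_imp_distrib_left.2
          fun hi => ((eventually_ge_nhds hi).filter_mono nhdsWithin_le_nhds)
    exact this.exists
  have hmem : update g j t ∈ recordSet r := by
    refine ⟨fun k => ?_, fun i hi => ?_⟩
    · rcases eq_or_ne k j with rfl | hk
      · simpa using ⟨ht0, htg.trans (hg.1.1 k).2⟩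
      · simpa [hk] using hg.1.1 k
    · obtain ⟨k, hk⟩ := not_forall.1 (hg.1.2 i)
      have hik : ∀ k ≠ j, g k < r i k := fun k hk => by simpa [hk] using hi k
      have hij : t < r i j := by simpa using hi j
      rcases eq_or_ne k j with rfl | hkj
      · rcases (not_lt.1 hk).lt_or_eq with hlt | heq
        · exact (ht i hlt).not_gt hij
        · obtain ⟨k', hk'j, hk'⟩ := h i heq.symm
          exact hk'.not_gt (hik k' hk'j)
      · exact hk (hik k hkj)
  have := congrFun (hg.2 _ hmem (update_le_iff.2 ⟨htg.le, fun k _ => le_rfl⟩)) j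
  rw [update_self] at this
  exact htg.ne this

lemma generators_finite (r : Fin ρ → Fin d → ℝ) : (generators r).Finite := by
  refine (Set.Finite.pi' fun j => (finite_range fun i => r i j).insert 0).subset
    fun g hg j => ?_
  rcases (hg.1.1 j).1.eq_or_lt with h | h
  · exact .inl h.symm
  · obtain ⟨i, hi, -⟩ := exists_eq_of_mem_generators hg h
    exact .inr ⟨i, hi.symm⟩

lemma generators_of_fin_zero (r : Fin 0 → Fin d → ℝ) : generators r = {0} := by
  have h0 : (0 : Fin d → ℝ) ∈ recordSet r := ⟨fun _ => ⟨le_rfl, one_pos⟩, finZeroElim⟩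
  refine eq_singleton_iff_unique_mem.2 ⟨⟨h0, fun y hy hy0 => le_antisymm hy0 fun j => (hy.1 j).1⟩,
    fun g hg => (hg.2 0 h0 fun j => (hg.1.1 j).1).symm⟩

lemma eq_of_forall_ne_le_of_mem_generators {a a' b : Fin d → ℝ} (ha : a ∈ generators r)
    (ha' : a' ∈ generators r) (hb : b ∈ recordSet r) {c : Fin d} (hbc : ∀ i, b c < r i c)
    (hba : ∀ k ≠ c, b k ≤ a k) (hba' : ∀ k ≠ c, b k ≤ a' k) : a = a' := by
  have hinf : a ⊓ a' ∈ recordSet r := by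
    by_contra hnot
    obtain ⟨i, hi⟩ := exists_strongLT_of_notMem_recordSet
      (fun k => ⟨le_inf (ha.1.1 k).1 (ha'.1.1 k).1, inf_le_left.trans_lt (ha.1.1 k).2⟩) hnot
    obtain ⟨k, hk⟩ := not_forall.1 (hb.2 i)
    rcases eq_or_ne k c with rfl | hkc
    · exact hk (hbc i)
    · exact hk ((le_inf (hba k hkc) (hba' k hkc)).trans_lt (hi k))
  exact (ha.2 _ hinf inf_le_left).symm.trans (ha'.2 _ hinf inf_le_right)

def facetGenerators (r : Fin ρ → Fin d → ℝ) (y : Fin d → ℝ) (j : Fin d) : Set (Fin d → ℝ) :=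
  {b ∈ generators r | b j = y j ∧ ∀ k ≠ j, b k < y k}

section DeletePoint

variable {n : ℕ} {r : Fin (n + 1) → Fin d → ℝ} {i₀ : Fin (n + 1)}

lemma mem_recordSet_iff_comp_succAbove {x : Fin d → ℝ} :
    x ∈ recordSet r ↔ x ∈ recordSet (r ∘ i₀.succAbove) ∧ ¬ x ≺ r i₀ := by
  simp only [recordSet, mem_ofPred_eq, comp_apply,
    Fin.forall_iff_succAbove i₀ (P := fun i => ¬ ∀ j, x j < r i j)]
  tauto

lemma mem_generators_of_mem_generators_comp_succAbove {g : Fin d → ℝ}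
    (hg : g ∈ generators (r ∘ i₀.succAbove)) (hgy : ¬ g ≺ r i₀) : g ∈ generators r :=
  ⟨mem_recordSet_iff_comp_succAbove.2 ⟨hg.1, hgy⟩,
    fun y hy => hg.2 y (mem_recordSet_iff_comp_succAbove.1 hy).1⟩

lemma ne_of_mem_generators_comp_succAbove (hr : ∀ i j, 0 < r i j)
    (hties : ∀ j, Injective fun i => r i j) {g : Fin d → ℝ}
    (hg : g ∈ generators (r ∘ i₀.succAbove)) (k : Fin d) : g k ≠ r i₀ k := by
  rcases (hg.1.1 k).1.eq_or_lt with h | h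
  · rw [← h]
    exact (hr i₀ k).ne
  · obtain ⟨i, hi, -⟩ := exists_eq_of_mem_generators hg h
    rw [hi]
    exact fun h => Fin.succAbove_ne i₀ i (hties k h)

lemma exists_mem_facetGenerators_le (hy : ∀ k, r i₀ k < 1) {a : Fin d → ℝ}
    (ha : a ∈ generators (r ∘ i₀.succAbove)) (hay : a ≺ r i₀) (j : Fin d) :
    ∃ b ∈ facetGenerators r (r i₀) j, ∀ k ≠ j, b k ≤ a k := by
  set a' := update a j (r i₀ j)
  have ha'y : a' ≤ r i₀ := update_le_iff.2 ⟨le_rfl, fun k _ => (hay k).le⟩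
  have ha'S : a' ∈ recordSet r := mem_recordSet_iff_comp_succAbove.2
    ⟨mem_recordSet_of_le ha.1 (le_update_iff.2 ⟨(hay j).le, fun _ _ => le_rfl⟩)
      fun k => (ha'y k).trans_lt (hy k), fun h => (h j).ne (update_self ..)⟩
  obtain ⟨b, hb, hba'⟩ := exists_generator_le ha'S
  have hba : ∀ k ≠ j, b k ≤ a k := fun k hk => by simpa [a', hk] using hba' k
  have hlt : ∀ k ≠ j, b k < r i₀ k := fun k hk => (hba k hk).trans_lt (hay k)
  refine ⟨b, ⟨hb, (hba'.trans ha'y j).antisymm ?_, hlt⟩, hba⟩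
  obtain ⟨k, hk⟩ := not_forall.1 (mem_recordSet_iff_comp_succAbove.1 hb.1).2
  rcases eq_or_ne k j with rfl | hkj
  · exact not_lt.1 hk
  · exact absurd (hlt k hkj) hk

lemma ncard_le_ncard_facetGenerators (hr : ∀ i j, r i j ∈ Ioo (0:ℝ) 1)
    (hties : ∀ j, Injective fun i => r i j) {c : Fin d} (hmin : ∀ i, r i₀ c ≤ r i c) :
    {a ∈ generators (r ∘ i₀.succAbove) | a ≺ r i₀}.ncard ≤
      (facetGenerators r (r i₀) c).ncard := by
  choose! π hπ hπle using fun a (ha : a ∈ {a ∈ generators (r ∘ i₀.succAbove) | a ≺ r i₀}) =>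
    exists_mem_facetGenerators_le (fun k => (hr i₀ k).2) ha.1 ha.2 c
  refine ncard_le_ncard_of_injOn π hπ (fun a ha a' ha' h => ?_)
    ((generators_finite r).subset fun b hb => hb.1)
  refine eq_of_forall_ne_le_of_mem_generators ha.1 ha'.1
    (mem_recordSet_iff_comp_succAbove.1 (hπ a ha).1.1).1 (fun i => ?_) (hπle a ha)
    (by rw [h]; exact hπle a' ha')
  rw [(hπ a ha).2.1]
  exact (hmin _).lt_of_ne fun h => Fin.succAbove_ne i₀ i (hties c h).symm

lemma facetGenerators_nonempty (hr : ∀ i j, r i j ∈ Ioo (0:ℝ) 1)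
    (hties : ∀ j, Injective fun i => r i j) (hinc : ∀ i i', i ≠ i' → ¬ r i ≤ r i')
    (j : Fin d) : (facetGenerators r (r i₀) j).Nonempty := by
  have hyS : r i₀ ∈ recordSet (r ∘ i₀.succAbove) :=
    ⟨fun k => ⟨(hr i₀ k).1.le, (hr i₀ k).2⟩,
      fun i h => hinc i₀ _ (Fin.succAbove_ne i₀ i).symm (le_of_strongLT h)⟩
  obtain ⟨a, ha, hay⟩ := exists_generator_le hyS
  have hay' : a ≺ r i₀ := fun k =>
    (hay k).lt_of_ne (ne_of_mem_generators_comp_succAbove (fun i j => (hr i j).1) hties ha k)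
  obtain ⟨b, hb, -⟩ := exists_mem_facetGenerators_le (fun k => (hr i₀ k).2) ha hay' j
  exact ⟨b, hb⟩

theorem ncard_generators_comp_succAbove_add_le (hr : ∀ i j, r i j ∈ Ioo (0:ℝ) 1)
    (hties : ∀ j, Injective fun i => r i j) (hinc : ∀ i i', i ≠ i' → ¬ r i ≤ r i')
    {c : Fin d} (hmin : ∀ i, r i₀ c ≤ r i c) :
    (generators (r ∘ i₀.succAbove)).ncard + (d - 1) ≤ (generators r).ncard := by
  set Z := generators (r ∘ i₀.succAbove)
  set A := {a ∈ Z | a ≺ r i₀}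
  set F := facetGenerators r (r i₀)
  have hZfin : Z.Finite := generators_finite _
  have hFfin : ∀ j, (F j).Finite := fun j => (generators_finite r).subset fun b hb => hb.1
  have hsub : (Z \ A) ∪ ⋃ j, F j ⊆ generators r :=
    union_subset (fun g hg => mem_generators_of_mem_generators_comp_succAbove hg.1
      fun h => hg.2 ⟨hg.1, h⟩) (iUnion_subset fun j b hb => hb.1)
  have hdisj : Disjoint (Z \ A) (⋃ j, F j) :=
    disjoint_iUnion_right.2 fun j => disjoint_left.2 fun g hg hgF =>
      ne_of_mem_generators_comp_succAbove (fun i j => (hr i j).1) hties hg.1 j hgF.2.1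
  have hFdisj : Pairwise (Disjoint on F) := fun j j' hjj' =>
    disjoint_left.2 fun b hb hb' => (hb'.2.2 j hjj').ne hb.2.1
  have hsumF : (F c).ncard + (d - 1) ≤ ∑ j, (F j).ncard := by
    rw [← Finset.add_sum_erase _ _ (Finset.mem_univ c)]
    gcongr
    simpa [Finset.card_erase_of_mem] using Finset.card_nsmul_le_sum (Finset.univ.erase c)
      (fun j => (F j).ncard) 1 fun j _ =>
        (ncard_pos (hFfin j)).2 (facetGenerators_nonempty hr hties hinc j)
  calc Z.ncard + (d - 1) = (Z \ A).ncard + A.ncard + (d - 1) := by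
        rw [ncard_sdiff_add_ncard_of_subset (sep_subset _ _) hZfin]
    _ ≤ (Z \ A).ncard + ((F c).ncard + (d - 1)) := by
        grw [add_assoc, ncard_le_ncard_facetGenerators hr hties hmin]
    _ ≤ (Z \ A).ncard + ∑ j, (F j).ncard := by grw [hsumF]
    _ = ((Z \ A) ∪ ⋃ j, F j).ncard := by
        rw [ncard_union_eq hdisj hZfin.sdiff (finite_iUnion hFfin),
          ncard_iUnion_of_finite hFfin hFdisj, finsum_eq_sum_of_fintype]
    _ ≤ (generators r).ncard := ncard_le_ncard hsub (generators_finite r)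

end DeletePoint

end

theorem generators_lower_bound (d ρ : ℕ) (hd : 1 ≤ d)
    (r : Fin ρ → Fin d → ℝ)
    (hr : ∀ i j, r i j ∈ Set.Ioo (0:ℝ) 1)
    (hties : ∀ j : Fin d, Function.Injective (fun i => r i j))
    (hinc : ∀ i i' : Fin ρ, i ≠ i' → ¬ r i ≤ r i') :
    (d - 1) * ρ + 1 ≤ (generators r).ncard := by
  induction ρ with
  | zero => simp [generators_of_fin_zero]
  | succ n ih =>
    obtain ⟨i₀, hi₀⟩ := Finite.exists_min fun i => r i ⟨0, hd⟩
    have h_del := ih (r ∘ i₀.succAbove) (fun i j => hr _ j)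
      (fun j => (hties j).comp Fin.succAbove_right_injective)
      (fun i i' h => hinc _ _ (Fin.succAbove_right_injective.ne h))
    have h_add := ncard_generators_comp_succAbove_add_le hr hties hinc hi₀
    calc (d - 1) * (n + 1) + 1 = (d - 1) * n + 1 + (d - 1) := by ring
      _ ≤ (generators r).ncard := by omega
end

section
/- For fixed d ≥ 1 and n ≥ 1, define Î_{d,n} := n^d ∫_{[0,1)^d} (∏(1-x_j))^{d-1} exp(-n∏(1-x_j)) dx and Ĩ_{d,n} := n^d ∫_{[0,1)^d} (∏(1-x_j))^{d-1} (1 - ∏(1-x_j))^n dx. Then 0 ≤ Î_{d,n} - Ĩ_{d,n} ≤ n^{d+1} ∫_{[0,1)^d} (∏(1-x_j))^{d+1} exp(-n ∏(1-x_j)) dx, and consequently Î_{d,n} - Ĩ_{d,n} = O(n^{-1} (ln n)^{d-1}) as n → ∞. -/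
open MeasureTheory Set

/-- The Poissonized expected number of interior generators. -/
noncomputable def Ihat (d n : ℕ) : ℝ :=
  (n : ℝ) ^ d * ∫ x in {x : Fin d → ℝ | ∀ j, x j ∈ Set.Ico (0:ℝ) 1},
    (∏ j, (1 - x j)) ^ (d - 1) * Real.exp (-(n : ℝ) * ∏ j, (1 - x j))

/-- The binomial analogue of `Ihat`. -/
noncomputable def Itilde (d n : ℕ) : ℝ :=
  (n : ℝ) ^ d * ∫ x in {x : Fin d → ℝ | ∀ j, x j ∈ Set.Ico (0:ℝ) 1},
    (∏ j, (1 - x j)) ^ (d - 1) * (1 - ∏ j, (1 - x j)) ^ n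

namespace PoisAux

def cube (d : ℕ) : Set (Fin d → ℝ) := {x | ∀ j, x j ∈ Set.Ico (0:ℝ) 1}

lemma cube_eq (d : ℕ) : cube d = Set.pi Set.univ (fun _ : Fin d => Set.Ico (0:ℝ) 1) := by
  ext x; simp [cube, Set.mem_pi]

lemma measurableSet_cube (d : ℕ) : MeasurableSet (cube d) := by
  rw [cube_eq]; exact MeasurableSet.univ_pi fun _ => measurableSet_Ico

lemma cube_subset_Icc (d : ℕ) :
    cube d ⊆ Set.pi Set.univ (fun _ : Fin d => Set.Icc (0:ℝ) 1) := by
  rw [cube_eq]; exact Set.pi_mono fun i _ => Set.Ico_subset_Icc_self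

lemma integrableOn_cube {d : ℕ} {F : (Fin d → ℝ) → ℝ} (hF : Continuous F) :
    IntegrableOn F (cube d) := by
  have h1 : IsCompact (Set.pi Set.univ (fun _ : Fin d => Set.Icc (0:ℝ) 1)) :=
    isCompact_univ_pi fun _ => isCompact_Icc
  exact (hF.continuousOn.integrableOn_compact h1).mono_set (cube_subset_Icc d)

lemma volume_cube (d : ℕ) : volume (cube d) = 1 := by
  rw [cube_eq, volume_pi_pi]; simp

lemma continuous_prodf (d : ℕ) : Continuous fun x : Fin d → ℝ => ∏ j, (1 - x j) :=
  continuous_finset_prod _ fun j _ => continuous_const.sub (continuous_apply j)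

lemma prod_mem {d : ℕ} {x : Fin d → ℝ} (hx : x ∈ cube d) :
    0 ≤ ∏ j, (1 - x j) ∧ (∏ j, (1 - x j)) ≤ 1 := by
  constructor
  · exact Finset.prod_nonneg fun j _ => by linarith [(hx j).2]
  · exact Finset.prod_le_one (fun j _ => by linarith [(hx j).2]) (fun j _ => by linarith [(hx j).1])

noncomputable def f (d k : ℕ) (c : ℝ) : ℝ :=
  ∫ x in cube d, (∏ j, (1 - x j)) ^ k * Real.exp (-c * ∏ j, (1 - x j))

lemma continuous_F (d k : ℕ) (c : ℝ) :
    Continuous fun x : Fin d → ℝ =>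
      (∏ j, (1 - x j)) ^ k * Real.exp (-c * ∏ j, (1 - x j)) :=
  ((continuous_prodf d).pow k).mul
    (Real.continuous_exp.comp (continuous_const.mul (continuous_prodf d)))

lemma f_nonneg (d k : ℕ) (c : ℝ) : 0 ≤ f d k c :=
  setIntegral_nonneg (measurableSet_cube d) fun x hx =>
    mul_nonneg (pow_nonneg (prod_mem hx).1 k) (Real.exp_nonneg _)

lemma f_le_one (d k : ℕ) {c : ℝ} (hc : 0 ≤ c) : f d k c ≤ 1 := by
  have : f d k c ≤ ∫ _x in cube d, (1:ℝ) := by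
    refine setIntegral_mono_on (integrableOn_cube (continuous_F d k c))
      (integrableOn_const (by rw [volume_cube]; exact ENNReal.one_ne_top))
      (measurableSet_cube d) (fun x hx => ?_)
    obtain ⟨h0, h1⟩ := prod_mem hx
    have he : Real.exp (-c * ∏ j, (1 - x j)) ≤ 1 :=
      Real.exp_le_one_iff.2 (by nlinarith)
    nlinarith [pow_le_one₀ h0 h1 (n := k), pow_nonneg h0 k, Real.exp_nonneg (-c * ∏ j, (1 - x j))]
  simpa [Measure.real, volume_cube d] using this

lemma f_zero (k : ℕ) (c : ℝ) : f 0 k c = Real.exp (-c) := by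
  have hcube : cube 0 = (Set.univ : Set (Fin 0 → ℝ)) := by
    ext x; simp [cube]
  have hvol : (volume : Measure (Fin 0 → ℝ)) Set.univ = 1 := by
    simp [volume_pi]
  simp [f, hcube, integral_const, hvol, Measure.real]


lemma f_succ (d k : ℕ) (c : ℝ) :
    f (d+1) k c = ∫ u in (0:ℝ)..1, u ^ k * f d k (c * u) ∧
    IntervalIntegrable (fun u => u ^ k * f d k (c * u)) volume 0 1 := by
  set e := MeasurableEquiv.piFinSuccAbove (fun _ : Fin (d+1) => ℝ) 0 with he
  have hmp : MeasurePreserving e.symm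
      ((volume : Measure ℝ).prod (volume : Measure (Fin d → ℝ))) volume :=
    (volume_preserving_piFinSuccAbove (fun _ : Fin (d+1) => ℝ) 0).symm e
  have happ0 : ∀ p : ℝ × (Fin d → ℝ), e.symm p 0 = p.1 := by
    intro p; simp [he, MeasurableEquiv.piFinSuccAbove]
  have happs : ∀ (p : ℝ × (Fin d → ℝ)) (j : Fin d), e.symm p j.succ = p.2 j := by
    intro p j; simp [he, MeasurableEquiv.piFinSuccAbove]
  have hprod : ∀ p : ℝ × (Fin d → ℝ),
      (∏ j, (1 - e.symm p j)) = (1 - p.1) * ∏ j, (1 - p.2 j) := by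
    intro p
    rw [Fin.prod_univ_succ, happ0]
    simp only [happs]
  have hpre : e.symm ⁻¹' cube (d+1) = (Set.Ico (0:ℝ) 1) ×ˢ cube d := by
    ext p
    simp only [Set.mem_preimage, cube, Set.mem_setOf_eq, Set.mem_prod]
    constructor
    · intro h
      exact ⟨by rw [← happ0 p]; exact h 0, fun j => by rw [← happs p j]; exact h j.succ⟩
    · intro ⟨h1, h2⟩ j
      rcases Fin.eq_zero_or_eq_succ j with rfl | ⟨i, rfl⟩
      · rw [happ0]; exact h1
      · rw [happs]; exact h2 i
  -- the transported integrand
  set G : ℝ × (Fin d → ℝ) → ℝ := fun p =>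
    ((1 - p.1) * ∏ j, (1 - p.2 j)) ^ k * Real.exp (-c * ((1 - p.1) * ∏ j, (1 - p.2 j)))
    with hG
  have hGF : ∀ p, ((∏ j, (1 - e.symm p j)) ^ k *
      Real.exp (-c * ∏ j, (1 - e.symm p j))) = G p := by
    intro p; rw [hG]; simp only [hprod p]
  have hGcont : Continuous G := by
    have h1 : Continuous fun p : ℝ × (Fin d → ℝ) => (1 - p.1) * ∏ j, (1 - p.2 j) :=
      (continuous_const.sub continuous_fst).mul
        ((continuous_finset_prod _ fun j _ =>
          continuous_const.sub (continuous_apply j)).comp continuous_snd)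
    exact (h1.pow k).mul (Real.continuous_exp.comp (continuous_const.mul h1))
  have hGint : IntegrableOn G ((Set.Ico (0:ℝ) 1) ×ˢ cube d)
      ((volume : Measure ℝ).prod (volume : Measure (Fin d → ℝ))) := by
    have hcomp : IsCompact ((Set.Icc (0:ℝ) 1) ×ˢ
        Set.pi Set.univ (fun _ : Fin d => Set.Icc (0:ℝ) 1)) :=
      isCompact_Icc.prod (isCompact_univ_pi fun _ => isCompact_Icc)
    refine (hGcont.continuousOn.integrableOn_compact hcomp).mono_set ?_
    refine Set.prod_mono Set.Ico_subset_Icc_self ?_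
    rw [cube_eq]; exact Set.pi_mono fun i _ => Set.Ico_subset_Icc_self
  have step1 : f (d+1) k c =
      ∫ p in (Set.Ico (0:ℝ) 1) ×ˢ cube d, G p
        ∂((volume : Measure ℝ).prod (volume : Measure (Fin d → ℝ))) := by
    rw [f, ← hmp.setIntegral_preimage_emb e.symm.measurableEmbedding _ (cube (d+1)), hpre]
    exact integral_congr_ae (Filter.Eventually.of_forall fun p => hGF p)
  have step2 : f (d+1) k c =
      ∫ a in Set.Ico (0:ℝ) 1, ∫ y in cube d, G (a, y) := by
    rw [step1, setIntegral_prod _ hGint]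
  have hinner : ∀ a : ℝ, (∫ y in cube d, G (a, y)) = (1 - a) ^ k * f d k (c * (1 - a)) := by
    intro a
    rw [f, ← integral_const_mul]
    refine integral_congr_ae (Filter.Eventually.of_forall fun y => ?_)
    rw [hG]
    simp only
    rw [mul_pow, show -c * ((1 - a) * ∏ j, (1 - y j)) = -(c * (1 - a)) * ∏ j, (1 - y j) by ring]
    ring
  -- integrability of the slice function
  have hsliceInt : IntegrableOn (fun a => (1 - a) ^ k * f d k (c * (1 - a)))
      (Set.Ico (0:ℝ) 1) volume := by
    have h0 : Integrable G ((volume.restrict (Set.Ico (0:ℝ) 1)).prod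
        (volume.restrict (cube d))) := by
      rwa [Measure.prod_restrict]
    have h1 := h0.integral_prod_left
    refine h1.congr (Filter.Eventually.of_forall fun a => ?_)
    exact (hinner a)
  have hIoc : IntegrableOn (fun a => (1 - a) ^ k * f d k (c * (1 - a)))
      (Set.Ioc (0:ℝ) 1) volume := by
    have hone : IntegrableOn (fun a => (1 - a) ^ k * f d k (c * (1 - a)))
        ({1} : Set ℝ) volume := by
      rw [IntegrableOn, Measure.restrict_eq_zero.mpr (by simp)]
      exact integrable_zero_measure
    refine (hsliceInt.union hone).mono_set ?_
    intro x hx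
    rcases eq_or_lt_of_le hx.2 with h | h
    · exact Or.inr (by simp [h])
    · exact Or.inl ⟨le_of_lt hx.1, h⟩
  have hivH : IntervalIntegrable (fun a => (1 - a) ^ k * f d k (c * (1 - a))) volume 0 1 :=
    (intervalIntegrable_iff_integrableOn_Ioc_of_le zero_le_one).2 hIoc
  have hivG : IntervalIntegrable (fun u => u ^ k * f d k (c * u)) volume 0 1 := by
    have := hivH.comp_sub_left 1
    simpa using this.symm
  constructor
  · rw [step2]
    have e1 : ∫ a in Set.Ico (0:ℝ) 1, ∫ y in cube d, G (a, y) =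
        ∫ a in Set.Ico (0:ℝ) 1, (1 - a) ^ k * f d k (c * (1 - a)) :=
      integral_congr_ae (Filter.Eventually.of_forall fun a => hinner a)
    rw [e1, integral_Ico_eq_integral_Ioo, ← integral_Ioc_eq_integral_Ioo,
      ← intervalIntegral.integral_of_le zero_le_one]
    have := intervalIntegral.integral_comp_sub_left (a := (0:ℝ)) (b := 1)
      (fun u => u ^ k * f d k (c * u)) 1
    simpa using this
  · exact hivG

lemma split_bound {g φ : ℝ → ℝ} (k : ℕ) {c : ℝ} (hc : 1 ≤ c)
    (hg : IntervalIntegrable g volume 0 1)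
    (h1 : ∀ u ∈ Set.Icc (0:ℝ) (1/c), g u ≤ u ^ k)
    (hφ : IntervalIntegrable φ volume (1/c) 1)
    (h2 : ∀ u ∈ Set.Icc (1/c) 1, g u ≤ φ u) :
    ∫ u in (0:ℝ)..1, g u ≤ (1/c)^(k+1)/((k:ℝ)+1) + ∫ u in (1/c)..1, φ u := by
  have hc0 : (0:ℝ) < c := lt_of_lt_of_le one_pos hc
  have h1c0 : (0:ℝ) < 1/c := by positivity
  have h1c1 : (1:ℝ)/c ≤ 1 := by rw [div_le_one hc0]; exact hc
  have hg1 : IntervalIntegrable g volume 0 (1/c) := by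
    refine hg.mono_set ?_
    rw [Set.uIcc_of_le (le_of_lt h1c0), Set.uIcc_of_le zero_le_one]
    exact Set.Icc_subset_Icc le_rfl h1c1
  have hg2 : IntervalIntegrable g volume (1/c) 1 := by
    refine hg.mono_set ?_
    rw [Set.uIcc_of_le h1c1, Set.uIcc_of_le zero_le_one]
    exact Set.Icc_subset_Icc (le_of_lt h1c0) le_rfl
  rw [← intervalIntegral.integral_add_adjacent_intervals hg1 hg2]
  have e1 : ∫ u in (0:ℝ)..(1/c), g u ≤ (1/c)^(k+1)/((k:ℝ)+1) := by
    have hpow : IntervalIntegrable (fun u : ℝ => u ^ k) volume 0 (1/c) :=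
      (continuous_pow k).intervalIntegrable _ _
    calc ∫ u in (0:ℝ)..(1/c), g u ≤ ∫ u in (0:ℝ)..(1/c), u ^ k :=
          intervalIntegral.integral_mono_on (le_of_lt h1c0) hg1 hpow h1
      _ = (1/c)^(k+1)/((k:ℝ)+1) := by
          rw [integral_pow]; push_cast; ring
  have e2 : ∫ u in (1/c)..1, g u ≤ ∫ u in (1/c)..1, φ u :=
    intervalIntegral.integral_mono_on h1c1 hg2 hφ h2
  linarith

lemma exp_neg_le (m : ℕ) {y : ℝ} (hy : 0 < y) : Real.exp (-y) ≤ (Nat.factorial m : ℝ) / y ^ m := by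
  have h := Real.pow_div_factorial_le_exp y hy.le m
  have hf : (0:ℝ) < (Nat.factorial m : ℝ) := by positivity
  have h2 : y ^ m ≤ (Nat.factorial m : ℝ) * Real.exp y := by
    rw [div_le_iff₀ hf] at h; linarith
  calc Real.exp (-y) = y ^ m * Real.exp (-y) / y ^ m := by field_simp
    _ ≤ ((Nat.factorial m : ℝ) * Real.exp y) * Real.exp (-y) / y ^ m := by
        gcongr
    _ = (Nat.factorial m : ℝ) / y ^ m := by
        rw [mul_assoc, ← Real.exp_add]; simp


lemma f_bound (k : ℕ) : ∀ (d : ℕ) (c : ℝ), 1 ≤ c →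
    f (d+1) k c ≤ ((Nat.factorial (k+2) : ℝ) + 1) * (1 + Real.log c) ^ d / c ^ (k+1) := by
  set A : ℝ := (Nat.factorial (k+2) : ℝ) with hA
  set B : ℝ := A + 1 with hB
  have hA1 : (1:ℝ) ≤ A := by
    rw [hA]
    exact_mod_cast Nat.one_le_iff_ne_zero.mpr (Nat.factorial_ne_zero _)
  have hB1 : (1:ℝ) ≤ B := by linarith
  intro d
  induction d with
  | zero =>
    intro c hc
    have hc0 : (0:ℝ) < c := lt_of_lt_of_le one_pos hc
    obtain ⟨heq, hint⟩ := f_succ 0 k c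
    rw [heq]
    simp only [pow_zero, mul_one]
    set φ : ℝ → ℝ := fun u => (A / c ^ (k+2)) * (u ^ 2)⁻¹ with hφ
    have h1c1 : (1:ℝ)/c ≤ 1 := by rw [div_le_one hc0]; exact hc
    have hφint : IntervalIntegrable φ volume (1/c) 1 := by
      apply ContinuousOn.intervalIntegrable
      apply ContinuousOn.mul continuousOn_const
      apply ContinuousOn.inv₀ (by fun_prop)
      intro x hx
      rw [Set.uIcc_of_le h1c1] at hx
      have hx0 : (0:ℝ) < x := lt_of_lt_of_le (by positivity) hx.1
      positivity
    have key : ∫ u in (0:ℝ)..1, u ^ k * f 0 k (c * u) ≤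
        (1/c)^(k+1)/((k:ℝ)+1) + ∫ u in (1/c)..1, φ u := by
      refine split_bound k hc hint ?_ hφint ?_
      · intro u hu
        rw [f_zero]
        have h1 : Real.exp (-(c*u)) ≤ 1 :=
          Real.exp_le_one_iff.2 (by nlinarith [hu.1])
        nlinarith [pow_nonneg hu.1 k, Real.exp_nonneg (-(c*u))]
      · intro u hu
        have hu0 : (0:ℝ) < u := lt_of_lt_of_le (by positivity) hu.1
        have hcu : (0:ℝ) < c * u := by positivity
        rw [f_zero, hφ]
        calc u ^ k * Real.exp (-(c*u)) ≤ u ^ k * (A / (c*u) ^ (k+2)) := by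
              have h2 := exp_neg_le (k+2) hcu
              rw [← hA] at h2
              exact mul_le_mul_of_nonneg_left h2 (pow_nonneg hu0.le k)
          _ = (A / c ^ (k+2)) * (u ^ 2)⁻¹ := by
              field_simp
              ring
    have hφval : ∫ u in (1/c)..1, φ u = (A / c ^ (k+2)) * (c - 1) := by
      rw [hφ, intervalIntegral.integral_const_mul]
      congr 1
      have h0 : (0:ℝ) ∉ Set.uIcc (1/c) 1 := by
        rw [Set.uIcc_of_le h1c1]
        intro h
        exact (by positivity : (0:ℝ) < 1/c).not_ge h.1
      have hz : ∀ u : ℝ, (u^2)⁻¹ = u ^ (-2 : ℤ) := by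
        intro u; rw [zpow_neg, zpow_two, sq]
      rw [intervalIntegral.integral_congr (g := fun u : ℝ => u ^ (-2:ℤ)) (fun u _ => hz u),
        integral_zpow (Or.inr ⟨by norm_num, h0⟩)]
      norm_num
      field_simp
      ring
    rw [hφval] at key
    refine le_trans key ?_
    have t1 : (1/c)^(k+1)/((k:ℝ)+1) ≤ 1 * (1/c^(k+1)) := by
      have h1 : (1/c)^(k+1)/((k:ℝ)+1) = (1/((k:ℝ)+1)) * (1/c^(k+1)) := by
        rw [div_pow, one_pow]; ring
      rw [h1]
      apply mul_le_mul_of_nonneg_right _ (by positivity)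
      rw [div_le_one (by positivity)]
      have : (0:ℝ) ≤ (k:ℝ) := Nat.cast_nonneg k
      linarith
    have t2 : (A / c ^ (k+2)) * (c - 1) ≤ A * (1/c^(k+1)) := by
      rw [div_mul_eq_mul_div, mul_div_assoc]
      apply mul_le_mul_of_nonneg_left _ (by linarith)
      rw [div_le_div_iff₀ (by positivity) (by positivity)]
      have hcc : c ^ (k+2) = c ^ (k+1) * c := pow_succ c (k+1)
      nlinarith [pow_pos hc0 (k+1)]
    calc (1/c)^(k+1)/((k:ℝ)+1) + (A / c ^ (k+2)) * (c - 1)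
        ≤ 1 * (1/c^(k+1)) + A * (1/c^(k+1)) := add_le_add t1 t2
      _ = B / c^(k+1) := by rw [hB]; ring
  | succ e IH =>
    intro c hc
    have hc0 : (0:ℝ) < c := lt_of_lt_of_le one_pos hc
    have hL : (0:ℝ) ≤ Real.log c := Real.log_nonneg hc
    obtain ⟨heq, hint⟩ := f_succ (e+1) k c
    rw [heq]
    have h1c1 : (1:ℝ)/c ≤ 1 := by rw [div_le_one hc0]; exact hc
    have hB0 : (0:ℝ) < B := lt_of_lt_of_le one_pos hB1
    set A' : ℝ := B * (1 + Real.log c) ^ e / c ^ (k+1) with hA'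
    have hA'0 : 0 ≤ A' := by
      rw [hA']
      apply div_nonneg (mul_nonneg hB0.le (pow_nonneg (by linarith) e)) (by positivity)
    set φ : ℝ → ℝ := fun u => A' * u⁻¹ with hφ
    have hφint : IntervalIntegrable φ volume (1/c) 1 := by
      apply ContinuousOn.intervalIntegrable
      apply ContinuousOn.mul continuousOn_const
      apply ContinuousOn.inv₀ (by fun_prop)
      intro x hx
      rw [Set.uIcc_of_le h1c1] at hx
      exact ne_of_gt (lt_of_lt_of_le (by positivity) hx.1)
    have key : ∫ u in (0:ℝ)..1, u ^ k * f (e+1) k (c * u) ≤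
        (1/c)^(k+1)/((k:ℝ)+1) + ∫ u in (1/c)..1, φ u := by
      refine split_bound k hc hint ?_ hφint ?_
      · intro u hu
        have hf1 : f (e+1) k (c*u) ≤ 1 := f_le_one _ _ (by nlinarith [hu.1])
        nlinarith [pow_nonneg hu.1 k, f_nonneg (e+1) k (c*u)]
      · intro u hu
        have hu0 : (0:ℝ) < u := lt_of_lt_of_le (by positivity) hu.1
        have hcu1 : (1:ℝ) ≤ c * u := by
          have h := mul_le_mul_of_nonneg_left hu.1 hc0.le
          calc (1:ℝ) = c * (1/c) := by field_simp
            _ ≤ c * u := h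
        have hcu0 : (0:ℝ) < c * u := by positivity
        have hIH := IH (c*u) hcu1
        have hlogcu : Real.log (c*u) ≤ Real.log c :=
          Real.log_le_log hcu0 (by nlinarith [hu.2])
        have hlog0 : (0:ℝ) ≤ Real.log (c*u) := Real.log_nonneg hcu1
        have hfle : f (e+1) k (c*u) ≤ B * (1 + Real.log c) ^ e / (c*u) ^ (k+1) := by
          refine le_trans hIH ?_
          gcongr
        have hstep : u ^ k * f (e+1) k (c*u) ≤
            u ^ k * (B * (1 + Real.log c) ^ e / (c*u) ^ (k+1)) :=
          mul_le_mul_of_nonneg_left hfle (pow_nonneg hu0.le k)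
        refine le_trans hstep ?_
        have heqq : u ^ k * (B * (1 + Real.log c) ^ e / (c*u) ^ (k+1)) = φ u := by
          rw [hφ]
          simp only
          rw [hA']
          field_simp
          ring
        rw [heqq]
    have hφval : ∫ u in (1/c)..1, φ u = A' * Real.log c := by
      rw [hφ]
      simp only
      rw [intervalIntegral.integral_const_mul]
      congr 1
      have h0 : (0:ℝ) ∉ Set.uIcc (1/c) 1 := by
        rw [Set.uIcc_of_le h1c1]
        intro h
        exact (by positivity : (0:ℝ) < 1/c).not_ge h.1
      rw [integral_inv h0, one_div_one_div]
    rw [hφval] at key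
    refine le_trans key ?_
    have hinv : (0:ℝ) ≤ 1/c^(k+1) := by positivity
    have hP : (1:ℝ) ≤ (1 + Real.log c) ^ e := one_le_pow₀ (by linarith)
    have hnum : 1/((k:ℝ)+1) + B * (1 + Real.log c) ^ e * Real.log c ≤
        B * (1 + Real.log c) ^ (e+1) := by
      have hk1 : (1:ℝ)/((k:ℝ)+1) ≤ 1 := by
        rw [div_le_one (by positivity)]
        have : (0:ℝ) ≤ (k:ℝ) := Nat.cast_nonneg k
        linarith
      rw [pow_succ]
      nlinarith
    calc (1/c)^(k+1)/((k:ℝ)+1) + A' * Real.log c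
        = (1/((k:ℝ)+1) + B * (1 + Real.log c) ^ e * Real.log c) * (1/c^(k+1)) := by
          rw [hA', div_pow, one_pow]; ring
      _ ≤ (B * (1 + Real.log c) ^ (e+1)) * (1/c^(k+1)) :=
          mul_le_mul_of_nonneg_right hnum hinv
      _ = B * (1 + Real.log c) ^ (e+1) / c^(k+1) := by ring


lemma key_ineq (n : ℕ) {t : ℝ} (ht0 : 0 ≤ t) (ht1 : t ≤ 1) :
    (1-t)^n ≤ Real.exp (-(n:ℝ)*t) ∧
    Real.exp (-(n:ℝ)*t) - (1-t)^n ≤ (n:ℝ) * t^2 * Real.exp (-(n:ℝ)*t) := by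
  have h1 : 1 - t ≤ Real.exp (-t) := by
    have := Real.add_one_le_exp (-t); linarith
  have hexpn : (Real.exp (-t))^n = Real.exp (-(n:ℝ)*t) := by
    rw [← Real.exp_nat_mul]; ring_nf
  have hub : (1-t)^n ≤ Real.exp (-(n:ℝ)*t) := by
    rw [← hexpn]
    exact pow_le_pow_left₀ (by linarith) h1 n
  refine ⟨hub, ?_⟩
  have hl1 : Real.exp (-t) * (1 + t) ≤ 1 := by
    have h := Real.add_one_le_exp t
    have hp := (Real.exp_pos (-t)).le
    calc Real.exp (-t) * (1 + t) ≤ Real.exp (-t) * Real.exp t :=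
          mul_le_mul_of_nonneg_left (by linarith) hp
      _ = 1 := by rw [← Real.exp_add]; simp
  have hl2 : Real.exp (-t) * (1 - t^2) ≤ 1 - t := by
    have he : Real.exp (-t) * (1 - t^2) = (Real.exp (-t) * (1+t)) * (1-t) := by ring
    rw [he]
    have hfac := mul_nonneg (sub_nonneg.mpr hl1) (sub_nonneg.mpr ht1)
    nlinarith [hfac]
  have hl2' : 0 ≤ Real.exp (-t) * (1 - t^2) :=
    mul_nonneg (Real.exp_nonneg _) (by nlinarith)
  have hBern : 1 + (n:ℝ) * (-(t^2)) ≤ (1 + (-(t^2)))^n :=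
    one_add_mul_le_pow (by nlinarith) n
  have hl3 : Real.exp (-(n:ℝ)*t) * (1 - (n:ℝ)*t^2) ≤ (1-t)^n := by
    calc Real.exp (-(n:ℝ)*t) * (1 - (n:ℝ)*t^2)
        ≤ Real.exp (-(n:ℝ)*t) * (1 - t^2)^n := by
          apply mul_le_mul_of_nonneg_left _ (Real.exp_nonneg _)
          calc 1 - (n:ℝ)*t^2 = 1 + (n:ℝ) * (-(t^2)) := by ring
            _ ≤ (1 + (-(t^2)))^n := hBern
            _ = (1 - t^2)^n := by ring_nf
      _ = (Real.exp (-t) * (1 - t^2))^n := by rw [mul_pow, hexpn]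
      _ ≤ (1-t)^n := pow_le_pow_left₀ hl2' hl2 n
  nlinarith [hl3]


lemma part1 (d : ℕ) (hd : 1 ≤ d) (n : ℕ) :
    0 ≤ Ihat d n - Itilde d n ∧
    Ihat d n - Itilde d n ≤ (n:ℝ)^(d+1) * f d (d+1) (n:ℝ) := by
  have hS : {x : Fin d → ℝ | ∀ j, x j ∈ Set.Ico (0:ℝ) 1} = cube d := rfl
  have hAint : IntegrableOn
      (fun x : Fin d → ℝ => (∏ j, (1 - x j)) ^ (d-1) * Real.exp (-(n:ℝ) * ∏ j, (1 - x j)))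
      (cube d) := integrableOn_cube (continuous_F d (d-1) (n:ℝ))
  have hBint : IntegrableOn
      (fun x : Fin d → ℝ => (∏ j, (1 - x j)) ^ (d-1) * (1 - ∏ j, (1 - x j)) ^ n)
      (cube d) := by
    apply integrableOn_cube
    exact ((continuous_prodf d).pow _).mul ((continuous_const.sub (continuous_prodf d)).pow n)
  have hCint : IntegrableOn
      (fun x : Fin d → ℝ => (∏ j, (1 - x j)) ^ (d+1) * Real.exp (-(n:ℝ) * ∏ j, (1 - x j)))
      (cube d) := integrableOn_cube (continuous_F d (d+1) (n:ℝ))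
  have hdiff : Ihat d n - Itilde d n = (n:ℝ)^d * ∫ x in cube d,
      ((∏ j, (1 - x j)) ^ (d-1) * Real.exp (-(n:ℝ) * ∏ j, (1 - x j)) -
        (∏ j, (1 - x j)) ^ (d-1) * (1 - ∏ j, (1 - x j)) ^ n) := by
    rw [Ihat, Itilde, hS, ← mul_sub, ← integral_sub hAint hBint]
  constructor
  · rw [hdiff]
    apply mul_nonneg (pow_nonneg (Nat.cast_nonneg n) d)
    apply setIntegral_nonneg (measurableSet_cube d)
    intro x hx
    obtain ⟨h0, h1⟩ := prod_mem hx
    have hk := (key_ineq n h0 h1).1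
    have hpw : (0:ℝ) ≤ (∏ j, (1 - x j)) ^ (d-1) := pow_nonneg h0 _
    nlinarith
  · rw [hdiff]
    have hmono : (∫ x in cube d,
        ((∏ j, (1 - x j)) ^ (d-1) * Real.exp (-(n:ℝ) * ∏ j, (1 - x j)) -
          (∏ j, (1 - x j)) ^ (d-1) * (1 - ∏ j, (1 - x j)) ^ n)) ≤
        ∫ x in cube d,
          (n:ℝ) * ((∏ j, (1 - x j)) ^ (d+1) * Real.exp (-(n:ℝ) * ∏ j, (1 - x j))) := by
      refine setIntegral_mono_on (hAint.sub hBint) (hCint.const_mul _)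
        (measurableSet_cube d) (fun x hx => ?_)
      obtain ⟨h0, h1⟩ := prod_mem hx
      have hk := (key_ineq n h0 h1).2
      have hpw : (0:ℝ) ≤ (∏ j, (1 - x j)) ^ (d-1) := pow_nonneg h0 _
      have hpe : (∏ j, (1 - x j)) ^ (d-1) * (∏ j, (1 - x j))^2 = (∏ j, (1 - x j)) ^ (d+1) := by
        rw [← pow_add]
        congr 1
        omega
      calc (∏ j, (1 - x j)) ^ (d-1) * Real.exp (-(n:ℝ) * ∏ j, (1 - x j)) -
            (∏ j, (1 - x j)) ^ (d-1) * (1 - ∏ j, (1 - x j)) ^ n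
          = (∏ j, (1 - x j)) ^ (d-1) *
            (Real.exp (-(n:ℝ) * ∏ j, (1 - x j)) - (1 - ∏ j, (1 - x j)) ^ n) := by ring
        _ ≤ (∏ j, (1 - x j)) ^ (d-1) *
            ((n:ℝ) * (∏ j, (1 - x j))^2 * Real.exp (-(n:ℝ) * ∏ j, (1 - x j))) :=
            mul_le_mul_of_nonneg_left hk hpw
        _ = (n:ℝ) * ((∏ j, (1 - x j)) ^ (d+1) * Real.exp (-(n:ℝ) * ∏ j, (1 - x j))) := by
            rw [← hpe]; ring
    calc (n:ℝ)^d * ∫ x in cube d,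
          ((∏ j, (1 - x j)) ^ (d-1) * Real.exp (-(n:ℝ) * ∏ j, (1 - x j)) -
            (∏ j, (1 - x j)) ^ (d-1) * (1 - ∏ j, (1 - x j)) ^ n)
        ≤ (n:ℝ)^d * ∫ x in cube d,
            (n:ℝ) * ((∏ j, (1 - x j)) ^ (d+1) * Real.exp (-(n:ℝ) * ∏ j, (1 - x j))) :=
          mul_le_mul_of_nonneg_left hmono (pow_nonneg (Nat.cast_nonneg n) d)
      _ = (n:ℝ)^(d+1) * f d (d+1) (n:ℝ) := by
          rw [integral_const_mul, f, pow_succ]; ring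


end PoisAux

theorem poissonization_error (d : ℕ) (hd : 1 ≤ d) :
    (∀ n : ℕ, 1 ≤ n →
      0 ≤ Ihat d n - Itilde d n ∧
      Ihat d n - Itilde d n ≤
        (n : ℝ) ^ (d + 1) * ∫ x in {x : Fin d → ℝ | ∀ j, x j ∈ Set.Ico (0:ℝ) 1},
          (∏ j, (1 - x j)) ^ (d + 1) * Real.exp (-(n : ℝ) * ∏ j, (1 - x j))) ∧
    (fun n : ℕ => Ihat d n - Itilde d n)
      =O[Filter.atTop] (fun n : ℕ => (Real.log n) ^ (d - 1) / n) := by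
  constructor
  · intro n _
    exact ⟨(PoisAux.part1 d hd n).1, (PoisAux.part1 d hd n).2⟩
  · set B' : ℝ := (Nat.factorial (d+3) : ℝ) + 1 with hB'
    have hB'0 : (0:ℝ) < B' := by positivity
    rw [Asymptotics.isBigO_iff]
    refine ⟨B' * 2^(d-1), ?_⟩
    filter_upwards [Filter.eventually_ge_atTop 3] with n hn
    have hn3 : (3:ℝ) ≤ (n:ℝ) := by exact_mod_cast hn
    have hn1 : (1:ℝ) ≤ (n:ℝ) := by linarith
    have hn0 : (0:ℝ) < (n:ℝ) := by linarith
    have hlog1 : (1:ℝ) ≤ Real.log n := by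
      rw [Real.le_log_iff_exp_le hn0]
      calc Real.exp 1 ≤ 2.7182818286 := Real.exp_one_lt_d9.le
        _ ≤ (n:ℝ) := by linarith
    obtain ⟨h1, h2⟩ := PoisAux.part1 d hd n
    have hf : PoisAux.f d (d+1) (n:ℝ) ≤ B' * (1 + Real.log n)^(d-1) / (n:ℝ)^(d+2) := by
      have hfb := PoisAux.f_bound (d+1) (d-1) (n:ℝ) hn1
      have hd1 : d - 1 + 1 = d := Nat.succ_pred_eq_of_pos hd
      rw [hd1] at hfb
      have e1 : d + 1 + 2 = d + 3 := by omega
      have e2 : d + 1 + 1 = d + 2 := by omega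
      rw [e1, e2] at hfb
      exact hfb
    have hchain : Ihat d n - Itilde d n ≤ B' * (1 + Real.log n)^(d-1) / n :=
      calc Ihat d n - Itilde d n ≤ (n:ℝ)^(d+1) * PoisAux.f d (d+1) (n:ℝ) := h2
        _ ≤ (n:ℝ)^(d+1) * (B' * (1 + Real.log n)^(d-1) / (n:ℝ)^(d+2)) :=
            mul_le_mul_of_nonneg_left hf (by positivity)
        _ = B' * (1 + Real.log n)^(d-1) / n := by
            have hne : (n:ℝ) ≠ 0 := ne_of_gt hn0
            field_simp
            ring
    have hlogpos : (0:ℝ) < Real.log n := lt_of_lt_of_le one_pos hlog1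
    rw [Real.norm_eq_abs, Real.norm_eq_abs, abs_of_nonneg h1,
      abs_of_nonneg (by positivity : (0:ℝ) ≤ (Real.log n)^(d-1) / n)]
    calc Ihat d n - Itilde d n ≤ B' * (1 + Real.log n)^(d-1) / n := hchain
      _ ≤ B' * (2 * Real.log n)^(d-1) / n := by
          gcongr
          linarith
      _ = B' * 2^(d-1) * ((Real.log n)^(d-1) / n) := by
          rw [mul_pow]; ring
end

section
/- Let r^(1),...,r^(ρ) ∈ (0,1)^d be incomparable points with no coordinate ties, S their record-setting region with generator set G, and T ⊆ [d]. Then the set G_T of generators whose set of nonzero coordinates equals T is exactly the image under the injection ι_T of the set of interior generators of the projected point family {π_T(r^(i)) : i ∈ [ρ]} ⊂ (0,1)^{|T|}. -/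
/-!
A point `x ∈ [0,1)^d` vanishing outside `T` never escapes the box below `r i` through a coordinate
`j ∉ T`, because `x j = 0 < r i j`. Hence such an `x` lies in the record-setting region exactly
when `π_T x` lies in that of the projected family. Moreover, anything in `[0,1)^d` below such an
`x` also vanishes outside `T`, so minimality transfers in both directions between `x` and `π_T x`.
-/

open Set

variable {d ρ : ℕ}

section Coordinates

variable (T : Finset (Fin d))

/-- The projection `π_T`. -/
def restrictTo (x : Fin d → ℝ) : Fin T.card → ℝ :=
  fun m => x (T.orderIsoOfFin rfl m)

/-- The injection `ι_T`. -/
def extendByZero (y : Fin T.card → ℝ) : Fin d → ℝ :=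
  fun j => if h : j ∈ T then y ((T.orderIsoOfFin rfl).symm ⟨j, h⟩) else 0

variable {T}

theorem exists_orderIsoOfFin_eq {j : Fin d} (hj : j ∈ T) :
    ∃ m, (T.orderIsoOfFin rfl m : Fin d) = j :=
  ⟨_, congrArg Subtype.val ((T.orderIsoOfFin rfl).apply_symm_apply ⟨j, hj⟩)⟩

theorem forall_iff_forall_orderIsoOfFin {P : Fin d → Prop} (hP : ∀ j ∉ T, P j) :
    (∀ j, P j) ↔ ∀ m, P (T.orderIsoOfFin rfl m) := by
  refine ⟨fun h m => h _, fun h j => ?_⟩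
  by_cases hj : j ∈ T
  · obtain ⟨m, rfl⟩ := exists_orderIsoOfFin_eq hj
    exact h m
  · exact hP j hj

theorem extendByZero_apply_orderIsoOfFin (y : Fin T.card → ℝ) (m : Fin T.card) :
    extendByZero T y (T.orderIsoOfFin rfl m) = y m := by
  rw [extendByZero, dif_pos (T.orderIsoOfFin rfl m).2]
  exact congrArg y ((T.orderIsoOfFin rfl).symm_apply_apply m)

theorem extendByZero_apply_of_notMem (y : Fin T.card → ℝ) {j : Fin d} (hj : j ∉ T) :
    extendByZero T y j = 0 :=
  dif_neg hj

theorem restrictTo_extendByZero (y : Fin T.card → ℝ) : restrictTo T (extendByZero T y) = y :=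
  funext (extendByZero_apply_orderIsoOfFin y)

theorem extendByZero_restrictTo {x : Fin d → ℝ} (hx : ∀ j ∉ T, x j = 0) :
    extendByZero T (restrictTo T x) = x := by
  funext j
  by_cases hj : j ∈ T
  · obtain ⟨m, rfl⟩ := exists_orderIsoOfFin_eq hj
    exact extendByZero_apply_orderIsoOfFin _ m
  · rw [extendByZero_apply_of_notMem _ hj, hx j hj]

theorem restrictTo_mono {x x' : Fin d → ℝ} (h : x ≤ x') : restrictTo T x ≤ restrictTo T x' :=
  fun _ => h _

theorem extendByZero_mono {y y' : Fin T.card → ℝ} (h : y ≤ y') :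
    extendByZero T y ≤ extendByZero T y' := by
  rw [Pi.le_def, forall_iff_forall_orderIsoOfFin fun j hj => by
    rw [extendByZero_apply_of_notMem _ hj, extendByZero_apply_of_notMem _ hj]]
  intro m
  rw [extendByZero_apply_orderIsoOfFin, extendByZero_apply_orderIsoOfFin]
  exact h m

theorem support_extendByZero {y : Fin T.card → ℝ} (hy : ∀ m, y m ≠ 0) :
    Function.support (extendByZero T y) = T := by
  ext j
  by_cases hj : j ∈ T
  · obtain ⟨m, rfl⟩ := exists_orderIsoOfFin_eq hj
    refine iff_of_true ?_ (T.orderIsoOfFin rfl m).2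
    rw [Function.mem_support, extendByZero_apply_orderIsoOfFin]
    exact hy m
  · exact iff_of_false (not_not.2 (extendByZero_apply_of_notMem y hj)) hj

end Coordinates

section RecordSet

variable {r : Fin ρ → Fin d → ℝ} {T : Finset (Fin d)}

theorem eq_zero_of_mem_recordSet_of_le {x z : Fin d → ℝ} (hz : z ∈ recordSet r) (hzx : z ≤ x)
    {j : Fin d} (hj : x j = 0) : z j = 0 :=
  le_antisymm (hj ▸ hzx j) (hz.1 j).1

theorem mem_recordSet_iff_restrictTo (hpos : ∀ i j, 0 < r i j) {x : Fin d → ℝ}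
    (hx : ∀ j ∉ T, x j = 0) :
    x ∈ recordSet r ↔ restrictTo T x ∈ recordSet (fun i => restrictTo T (r i)) :=
  and_congr
    (forall_iff_forall_orderIsoOfFin fun j hj => by rw [hx j hj]; exact ⟨le_rfl, one_pos⟩)
    (forall_congr' fun i => not_congr <|
      forall_iff_forall_orderIsoOfFin fun j hj => by rw [hx j hj]; exact hpos i j)

theorem restrictTo_mem_generators (hpos : ∀ i j, 0 < r i j) {g : Fin d → ℝ}
    (hg : g ∈ generators r) (hgT : ∀ j ∉ T, g j = 0) :
    restrictTo T g ∈ generators (fun i => restrictTo T (r i)) := by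
  refine ⟨(mem_recordSet_iff_restrictTo hpos hgT).1 hg.1, fun z hz hzg => ?_⟩
  have hzT : ∀ j ∉ T, extendByZero T z j = 0 := fun j hj => extendByZero_apply_of_notMem z hj
  have hz' : extendByZero T z ∈ recordSet r := by
    rw [mem_recordSet_iff_restrictTo hpos hzT, restrictTo_extendByZero]
    exact hz
  have hzg' : extendByZero T z ≤ g := extendByZero_restrictTo hgT ▸ extendByZero_mono hzg
  rw [← restrictTo_extendByZero z, hg.2 _ hz' hzg']

theorem extendByZero_mem_generators (hpos : ∀ i j, 0 < r i j) {y : Fin T.card → ℝ}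
    (hy : y ∈ generators (fun i => restrictTo T (r i))) : extendByZero T y ∈ generators r := by
  have hyT : ∀ j ∉ T, extendByZero T y j = 0 := fun j hj => extendByZero_apply_of_notMem y hj
  refine ⟨?_, fun z hz hzy => ?_⟩
  · rw [mem_recordSet_iff_restrictTo hpos hyT, restrictTo_extendByZero]
    exact hy.1
  have hzT : ∀ j ∉ T, z j = 0 := fun j hj => eq_zero_of_mem_recordSet_of_le hz hzy (hyT j hj)
  have hzy' : restrictTo T z = y :=
    hy.2 _ ((mem_recordSet_iff_restrictTo hpos hzT).1 hz)
      (restrictTo_extendByZero y ▸ restrictTo_mono hzy)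
  rw [← hzy', extendByZero_restrictTo hzT]

end RecordSet

theorem generators_with_support_T_general (d ρ : ℕ)
    (r : Fin ρ → Fin d → ℝ)
    (hr : ∀ i j, r i j ∈ Set.Ioo (0:ℝ) 1)
    (T : Finset (Fin d)) :
    {g | g ∈ generators r ∧ {j : Fin d | g j ≠ 0} = ↑T} =
      (fun y : Fin T.card → ℝ => fun j : Fin d =>
          if h : j ∈ T then y ((T.orderIsoOfFin rfl).symm ⟨j, h⟩) else 0) ''
        {y : Fin T.card → ℝ |
          y ∈ generators (fun i m => r i ((T.orderIsoOfFin rfl) m)) ∧ ∀ m, y m ≠ 0} := by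
  have hpos : ∀ i j, 0 < r i j := fun i j => (hr i j).1
  change {g | g ∈ generators r ∧ Function.support g = T} =
    extendByZero T '' {y | y ∈ generators (fun i => restrictTo T (r i)) ∧ ∀ m, y m ≠ 0}
  ext g
  constructor
  · rintro ⟨hg, hsupp⟩
    have hgT : ∀ j ∉ T, g j = 0 := fun j hj =>
      Function.notMem_support.1 (by rwa [hsupp, Finset.mem_coe])
    refine ⟨restrictTo T g, ⟨restrictTo_mem_generators hpos hg hgT, fun m => ?_⟩,
      extendByZero_restrictTo hgT⟩
    have hm : (T.orderIsoOfFin rfl m : Fin d) ∈ Function.support g := by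
      rw [hsupp]
      exact (T.orderIsoOfFin rfl m).2
    exact hm
  · rintro ⟨y, ⟨hy, hy0⟩, rfl⟩
    exact ⟨extendByZero_mem_generators hpos hy, support_extendByZero hy0⟩

theorem generators_with_support_T (d ρ : ℕ)
    (r : Fin ρ → Fin d → ℝ)
    (hr : ∀ i j, r i j ∈ Set.Ioo (0:ℝ) 1)
    (hties : ∀ j : Fin d, Function.Injective (fun i => r i j))
    (hinc : ∀ i i' : Fin ρ, i ≠ i' → ¬ r i ≤ r i')
    (T : Finset (Fin d)) :
    {g | g ∈ generators r ∧ {j : Fin d | g j ≠ 0} = ↑T} =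
      (fun y : Fin T.card → ℝ => fun j : Fin d =>
          if h : j ∈ T then y ((T.orderIsoOfFin rfl).symm ⟨j, h⟩) else 0) ''
        {y : Fin T.card → ℝ |
          y ∈ generators (fun i m => r i ((T.orderIsoOfFin rfl) m)) ∧ ∀ m, y m ≠ 0} :=
  generators_with_support_T_general d ρ r hr T
end
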